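/- Under the assumptions on F, for every j ≥ 3 the polynomials A_j^{j+1}(z) and A_j^{j+2}(z) are identically zero (a consequence of P^(1)(z,y) and P^(2)(z,y) being of degree at most 1 in y). -/

import Mathlib

open scoped BigOperators

noncomputable section

/-- Polynomials in `z` (outer variable) with coefficients polynomials in `y` (inner variable);
this is the ring in which the coefficients `P^(k)(z,y)` live. -/
abbrev Bzy : Type := Polynomial (Polynomial ℂ)

/-- The variable `y` as an element of `Bzy` (the outer variable `Polynomial.X` is `z`). -/
def yB : Bzy := Polynomial.C Polynomial.X

/-- A complex constant as an element of `Bzy`. -/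
def cB (c : ℂ) : Bzy := Polynomial.C (Polynomial.C c)

/-- The power series `u = z + q (y - z)` in the variable `q`, with coefficients in `Bzy`. -/
def useries : PowerSeries Bzy :=
  PowerSeries.C (R := Bzy) Polynomial.X + PowerSeries.X * PowerSeries.C (R := Bzy) (yB - Polynomial.X)

/-- The inclusion of complex constants into `Bzy[[q]]`. -/
def constHom : ℂ →+* PowerSeries Bzy :=
  (PowerSeries.C (R := Bzy)).comp
    ((Polynomial.C : Polynomial ℂ →+* Bzy).comp (Polynomial.C : ℂ →+* Polynomial ℂ))

/-- Substitution of `u = z + q(y-z)` for the variable in a polynomial in `y`. -/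
def substY : Polynomial ℂ →+* PowerSeries Bzy :=
  Polynomial.eval₂RingHom constHom useries

/-- Substitution `z ↦ z`, `y ↦ u = z + q(y-z)` in a polynomial in `z` and `y`. -/
def substZY : Bzy →+* PowerSeries Bzy :=
  Polynomial.eval₂RingHom substY (PowerSeries.C (R := Bzy) Polynomial.X)

/-- The formal functional equation `z·F(z,y) = (1-ρ+ρu)·[(z-1)·F(0,u) + F(z,u)]`, where
`F = Σ_k q^k P^(k)(z,y)`, `F(0,u)` is obtained by setting `z = 0` (i.e. taking the coefficient
of `z^0`) and substituting `u` for `y`, and `F(z,u)` by substituting `u` for `y`; the `m`-th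
coefficient of `F(z,u)` is `Σ_{k ≤ m} [q^(m-k)] (P^(k)(z, z + q(y-z)))`, and similarly
for `F(0,u)`. -/
def FuncEq (ρ : ℝ) (P : ℕ → Bzy) : Prop :=
  PowerSeries.C (R := Bzy) Polynomial.X * PowerSeries.mk (fun k => P k) =
    (constHom (1 - (ρ : ℂ)) + constHom (ρ : ℂ) * useries) *
      (PowerSeries.C (R := Bzy) (Polynomial.X - 1) *
          PowerSeries.mk (fun m => ∑ k ∈ Finset.range (m + 1),
            PowerSeries.coeff (R := Bzy) (m - k) (substY ((P k).coeff 0))) +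
        PowerSeries.mk (fun m => ∑ k ∈ Finset.range (m + 1),
          PowerSeries.coeff (R := Bzy) (m - k) (substZY (P k))))

/-- `P^(0)(z,y)` does not depend on `y`. -/
def IndepY (P : ℕ → Bzy) : Prop := ∀ n : ℕ, ∃ c : ℂ, (P 0).coeff n = Polynomial.C c

/-- Boundary conditions: `P^(0)(0,1) = 1 - ρ` and `P^(k)(0,1) = 0` for all `k ≥ 1`. -/
def Boundary (ρ : ℝ) (P : ℕ → Bzy) : Prop :=
  ((P 0).coeff 0).eval 1 = 1 - (ρ : ℂ) ∧ ∀ k : ℕ, 1 ≤ k → ((P k).coeff 0).eval 1 = 0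

/-- Derivative with respect to the inner variable `y`. -/
def dy (p : Bzy) : Bzy :=
  p.sum fun n a => Polynomial.C (Polynomial.derivative a) * Polynomial.X ^ n

/-- The polynomial `P^(k)(0,y) + (P^(k)(z,y) - P^(k)(0,y))/z`, where the quotient is exact
polynomial division by the monic polynomial `z`. -/
def bracket (P : ℕ → Bzy) (k : ℕ) : Bzy :=
  Polynomial.C ((P k).coeff 0) + (P k - Polynomial.C ((P k).coeff 0)) /ₘ Polynomial.X

/-- `a_j^k(z) = ∂_y^j [P^(k)(0,y) + (P^(k)(z,y) - P^(k)(0,y))/z] |_{y=z}`, a polynomial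
in the single variable `z`. -/
def aCoef (P : ℕ → Bzy) (j k : ℕ) : Polynomial ℂ :=
  Polynomial.eval₂ (RingHom.id (Polynomial ℂ)) Polynomial.X ((dy^[j]) (bracket P k))

/-- Reinterpret a polynomial in the single variable `z` as an element of `Bzy`. -/
def embZ : Polynomial ℂ →+* Bzy := Polynomial.mapRingHom (Polynomial.C : ℂ →+* Polynomial ℂ)

/-- `A_j^k(z) = jρ a_{j-1}^{k-j}(z) + (1+ρ(z-1)) a_j^{k-j}(z)` for `1 ≤ j ≤ k`,
`A_0^0(z) = 1 + ρ(z-1)`, and `A_j^k(z) = 0` otherwise. -/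
def Acoef (ρ : ℝ) (P : ℕ → Bzy) (j k : ℕ) : Polynomial ℂ :=
  if 1 ≤ j ∧ j ≤ k then
    (j : Polynomial ℂ) * Polynomial.C (ρ : ℂ) * aCoef P (j - 1) (k - j) +
      (1 + Polynomial.C (ρ : ℂ) * (Polynomial.X - 1)) * aCoef P j (k - j)
  else if j = 0 ∧ k = 0 then 1 + Polynomial.C (ρ : ℂ) * (Polynomial.X - 1)
  else 0

end

/-!
Grade everything by the degree in `y`. Since `u = z + q(y - z)`, the `q^i`-coefficient of
`p(z,u)` has `y`-degree at most `i`, and at most the `y`-degree of `p`. Once `P^(0)` is free of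
`y`, this bounds the `y`-degree of the `q^j`-coefficient of `(z-1)F(0,u) + F(z,u)` by `j - 1`,
while the `q^i`-coefficient of `1 - ρ + ρu` has `y`-degree at most `min(i, 1)`. Comparing
`q^m`-coefficients in the functional equation, `z P^(m)` and hence `P^(m)` has `y`-degree at most
`max(m - 1, 1)`. So `P^(1)` and `P^(2)` are affine in `y`, and `∂_y^j` kills their brackets for
`j ≥ 2`.
-/

open Polynomial

def YDegLE (d : ℕ) (p : Bzy) : Prop := ∀ n, (p.coeff n).natDegree ≤ d

section YDegLE

variable {d e : ℕ} {p q : Bzy}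

lemma YDegLE.mono (hp : YDegLE d p) (h : d ≤ e) : YDegLE e p := fun n => (hp n).trans h

lemma exists_yDegLE (p : Bzy) : ∃ d, YDegLE d p := by
  refine ⟨p.support.sup fun n => (p.coeff n).natDegree, fun n => ?_⟩
  by_cases hn : n ∈ p.support
  · exact Finset.le_sup (f := fun n => (p.coeff n).natDegree) hn
  · simp [notMem_support_iff.mp hn]

lemma yDegLE_zero : YDegLE d (0 : Bzy) := fun n => by simp

lemma yDegLE_C {v : ℂ[X]} (h : v.natDegree ≤ d) : YDegLE d (C v) := fun n => by
  rcases n with _ | n <;> simp [coeff_C, h]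

lemma yDegLE_X_pow (n : ℕ) : YDegLE d ((X : Bzy) ^ n) := fun m => by
  rw [coeff_X_pow]
  split_ifs <;> simp

lemma yDegLE_X : YDegLE d (X : Bzy) := by
  simpa using yDegLE_X_pow (d := d) 1

lemma YDegLE.add (hp : YDegLE d p) (hq : YDegLE d q) : YDegLE d (p + q) := fun n => by
  rw [coeff_add]
  exact (natDegree_add_le _ _).trans (max_le (hp n) (hq n))

lemma YDegLE.sub (hp : YDegLE d p) (hq : YDegLE d q) : YDegLE d (p - q) := fun n => by
  rw [coeff_sub]
  exact (natDegree_sub_le _ _).trans (max_le (hp n) (hq n))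

lemma yDegLE_sum {ι : Type*} {s : Finset ι} {f : ι → Bzy} (h : ∀ i ∈ s, YDegLE d (f i)) :
    YDegLE d (∑ i ∈ s, f i) := fun n => by
  rw [finsetSum_coeff]
  exact natDegree_sum_le_of_forall_le _ _ fun i hi => h i hi n

lemma YDegLE.mul (hp : YDegLE d p) (hq : YDegLE e q) : YDegLE (d + e) (p * q) := fun n => by
  rw [coeff_mul]
  exact natDegree_sum_le_of_forall_le _ _ fun x _ =>
    natDegree_mul_le.trans (add_le_add (hp x.1) (hq x.2))

lemma YDegLE.of_X_mul (h : YDegLE d (X * p)) : YDegLE d p := fun n => by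
  simpa [coeff_X_mul] using h (n + 1)

end YDegLE

def SeriesYDegLE (a b : ℕ) (φ : PowerSeries Bzy) : Prop :=
  ∀ i, YDegLE (a * i + b) (PowerSeries.coeff i φ)

section SeriesYDegLE

variable {a b b' d : ℕ} {φ ψ : PowerSeries Bzy}

lemma SeriesYDegLE.mono (h : SeriesYDegLE a b φ) (hb : b ≤ b') : SeriesYDegLE a b' φ :=
  fun i => (h i).mono (by omega)

lemma SeriesYDegLE.add (hφ : SeriesYDegLE a b φ) (hψ : SeriesYDegLE a b ψ) :
    SeriesYDegLE a b (φ + ψ) := fun i => by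
  rw [map_add]
  exact (hφ i).add (hψ i)

lemma SeriesYDegLE.sum {ι : Type*} {s : Finset ι} {f : ι → PowerSeries Bzy}
    (h : ∀ i ∈ s, SeriesYDegLE a b (f i)) : SeriesYDegLE a b (∑ i ∈ s, f i) := fun n => by
  rw [map_sum]
  exact yDegLE_sum fun i hi => h i hi n

lemma SeriesYDegLE.mul (hφ : SeriesYDegLE a b φ) (hψ : SeriesYDegLE a b' ψ) :
    SeriesYDegLE a (b + b') (φ * ψ) := fun n => by
  rw [PowerSeries.coeff_mul]
  refine yDegLE_sum fun x hx => ((hφ x.1).mul (hψ x.2)).mono (le_of_eq ?_)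
  rw [← Finset.HasAntidiagonal.mem_antidiagonal.mp hx]
  ring

lemma seriesYDegLE_C {v : Bzy} (h : YDegLE b v) : SeriesYDegLE a b (PowerSeries.C v) :=
  fun i => by
  rw [PowerSeries.coeff_C]
  split_ifs
  · exact h.mono (Nat.le_add_left b _)
  · exact yDegLE_zero

lemma SeriesYDegLE.pow (h : SeriesYDegLE a b φ) (n : ℕ) : SeriesYDegLE a (n * b) (φ ^ n) := by
  induction n with
  | zero => simpa using seriesYDegLE_C (a := a) (yDegLE_C (d := 0) natDegree_one.le)
  | succ n ih => simpa [pow_succ, add_mul] using ih.mul h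

lemma seriesYDegLE_constHom (c : ℂ) : SeriesYDegLE a 0 (constHom c) :=
  seriesYDegLE_C (yDegLE_C (natDegree_C c).le)

lemma seriesYDegLE_useries (h : 1 ≤ a + b) : SeriesYDegLE a b useries := by
  rintro (_ | _ | i)
  · simpa [useries] using yDegLE_X
  · simpa [useries, yB, PowerSeries.coeff_X] using
      (yDegLE_C (natDegree_X_le.trans h)).sub (yDegLE_X (d := a + b))
  · simpa [useries, PowerSeries.coeff_X] using yDegLE_zero

lemma seriesYDegLE_substY (hu : SeriesYDegLE a b useries) (v : ℂ[X]) :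
    SeriesYDegLE a (b * v.natDegree) (substY v) := by
  rw [substY, coe_eval₂RingHom, eval₂_eq_sum, Polynomial.sum_def]
  refine SeriesYDegLE.sum fun n hn => ((seriesYDegLE_constHom _).mul (hu.pow n)).mono ?_
  rw [zero_add, mul_comm]
  exact Nat.mul_le_mul_left b (le_natDegree_of_mem_supp n hn)

lemma seriesYDegLE_substZY (hu : SeriesYDegLE a b useries) {p : Bzy} (hp : YDegLE d p) :
    SeriesYDegLE a (b * d) (substZY p) := by
  rw [substZY, coe_eval₂RingHom, eval₂_eq_sum, Polynomial.sum_def]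
  refine SeriesYDegLE.sum fun n _ => ?_
  simpa using ((seriesYDegLE_substY hu _).mono (Nat.mul_le_mul_left b (hp n))).mul
    ((seriesYDegLE_C (a := a) (yDegLE_X (d := 0))).pow n)

end SeriesYDegLE

/-- The factor `1 - ρ + ρu` of the functional equation. -/
noncomputable def factorU (ρ : ℝ) : PowerSeries Bzy :=
  constHom (1 - (ρ : ℂ)) + constHom (ρ : ℂ) * useries

/-- The factor `(z - 1) F(0,u) + F(z,u)` of the functional equation. -/
noncomputable def factorF (P : ℕ → Bzy) : PowerSeries Bzy :=
  PowerSeries.C (X - 1) *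
      PowerSeries.mk (fun m => ∑ k ∈ Finset.range (m + 1),
        PowerSeries.coeff (m - k) (substY ((P k).coeff 0))) +
    PowerSeries.mk (fun m => ∑ k ∈ Finset.range (m + 1),
      PowerSeries.coeff (m - k) (substZY (P k)))

section FuncEq

variable {ρ : ℝ} {P : ℕ → Bzy} {a b d m : ℕ}

lemma seriesYDegLE_factorU (hu : SeriesYDegLE a b useries) : SeriesYDegLE a b (factorU ρ) :=
  ((seriesYDegLE_constHom _).mono (Nat.zero_le b)).add
    (by simpa using (seriesYDegLE_constHom _).mul hu)

lemma yDegLE_coeff_factorF (hP₀ : YDegLE 0 (P 0)) (hm : m ≤ d + 1) :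
    YDegLE d (PowerSeries.coeff m (factorF P)) := by
  have hu₀ : SeriesYDegLE 0 1 useries := seriesYDegLE_useries le_rfl
  have hu₁ : SeriesYDegLE 1 0 useries := seriesYDegLE_useries le_rfl
  have hterm : ∀ k ∈ Finset.range (m + 1),
      YDegLE d (PowerSeries.coeff (m - k) (substY ((P k).coeff 0))) ∧
        YDegLE d (PowerSeries.coeff (m - k) (substZY (P k))) := by
    intro k _
    -- `P^(0)` is free of `y`; for `k ≥ 1` the bound `m - k ≤ d` from the `q`-degree suffices
    rcases Nat.eq_zero_or_pos k with rfl | hk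
    · exact ⟨(seriesYDegLE_substY hu₀ _ _).mono (by simp [Nat.le_zero.mp (hP₀ 0)]),
        (seriesYDegLE_substZY hu₀ hP₀ _).mono (by simp)⟩
    · obtain ⟨e, he⟩ := exists_yDegLE (P k)
      exact ⟨(seriesYDegLE_substY hu₁ _ _).mono (by omega),
        (seriesYDegLE_substZY hu₁ he _).mono (by omega)⟩
  have hXsub : YDegLE 0 ((X : Bzy) - 1) := yDegLE_X.sub (yDegLE_C natDegree_one.le)
  have hsubY := hXsub.mul (yDegLE_sum fun k hk => (hterm k hk).1)
  rw [zero_add] at hsubY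
  rw [factorF, map_add, PowerSeries.coeff_C_mul, PowerSeries.coeff_mk, PowerSeries.coeff_mk]
  exact hsubY.add (yDegLE_sum fun k hk => (hterm k hk).2)

theorem yDegLE_of_funcEq (hF : FuncEq ρ P) (hI : IndepY P) (hd : 1 ≤ d) (hm : m ≤ d + 1) :
    YDegLE d (P m) := by
  have hP₀ : YDegLE 0 (P 0) := fun n => by
    obtain ⟨c, hc⟩ := hI n
    simp [hc]
  have hcoeff : X * P m = PowerSeries.coeff m (factorU ρ * factorF P) := by
    have hF' : PowerSeries.C X * PowerSeries.mk P = factorU ρ * factorF P := hF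
    rw [← hF', PowerSeries.coeff_C_mul, PowerSeries.coeff_mk]
  refine YDegLE.of_X_mul ?_
  rw [hcoeff, PowerSeries.coeff_mul]
  refine yDegLE_sum fun ⟨i, j⟩ hij => ?_
  have hij : i + j = m := Finset.HasAntidiagonal.mem_antidiagonal.mp hij
  -- the `q^0`-coefficient of `1 - ρ + ρu` is free of `y`, the others are affine in `y`
  rcases Nat.eq_zero_or_pos i with rfl | hi
  · simpa using
      (seriesYDegLE_factorU (ρ := ρ) (seriesYDegLE_useries (a := 1) (b := 0) le_rfl) 0).mul
        (yDegLE_coeff_factorF hP₀ (d := d) (by omega))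
  · exact ((seriesYDegLE_factorU (ρ := ρ) (seriesYDegLE_useries (a := 0) (b := 1) le_rfl) i).mul
      (yDegLE_coeff_factorF hP₀ (d := d - 1) (by omega))).mono (by omega)

end FuncEq

lemma coeff_dy (p : Bzy) (n : ℕ) : (dy p).coeff n = derivative (p.coeff n) := by
  rw [dy, coeff_sum, Polynomial.sum_def]
  simp_rw [C_mul_X_pow_eq_monomial, coeff_monomial]
  rw [Finset.sum_ite_eq' p.support n]
  split_ifs with hn
  · rfl
  · simp [notMem_support_iff.mp hn]

lemma YDegLE.dy {d : ℕ} {p : Bzy} (h : YDegLE d p) : YDegLE (d - 1) (dy p) := fun n => by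
  rw [coeff_dy]
  exact (natDegree_derivative_le _).trans (Nat.sub_le_sub_right (h n) 1)

lemma dy_eq_zero {p : Bzy} (h : YDegLE 0 p) : dy p = 0 := by
  ext1 n
  rw [coeff_dy, eq_C_of_natDegree_eq_zero (Nat.le_zero.mp (h n)), derivative_C, coeff_zero]

lemma dy_iterate_eq_zero {d j : ℕ} {p : Bzy} (h : YDegLE d p) (hj : d < j) : dy^[j] p = 0 := by
  induction j generalizing d p with
  | zero => omega
  | succ j ih =>
    rw [Function.iterate_succ_apply]
    rcases Nat.eq_zero_or_pos d with rfl | hd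
    · rw [dy_eq_zero h]
      exact Function.iterate_fixed (dy_eq_zero yDegLE_zero) j
    · exact ih h.dy (by omega)

lemma sub_C_coeff_zero_divByMonic_X (p : Bzy) : (p - C (p.coeff 0)) /ₘ X = divX p := by
  rw [← eq_sub_of_add_eq (divX_mul_X_add p), mul_comm]
  exact mul_divByMonic_cancel_left _ monic_X

lemma aCoef_eq_zero {P : ℕ → Bzy} {d j k : ℕ} (h : YDegLE d (P k)) (hj : d < j) :
    aCoef P j k = 0 := by
  have hbracket : YDegLE d (bracket P k) := by
    rw [bracket, sub_C_coeff_zero_divByMonic_X]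
    exact (yDegLE_C (h 0)).add fun n => by rw [coeff_divX]; exact h (n + 1)
  rw [aCoef, dy_iterate_eq_zero hbracket hj, eval₂_zero]

theorem stmt14_general (ρ : ℝ) (P : ℕ → Bzy)
    (hF : FuncEq ρ P) (hI : IndepY P) :
    ∀ j : ℕ, 3 ≤ j → Acoef ρ P j (j + 1) = 0 ∧ Acoef ρ P j (j + 2) = 0 := by
  intro j hj
  have hvanish : ∀ k, 1 ≤ k → k ≤ 2 → Acoef ρ P j (j + k) = 0 := by
    intro k hk₁ hk₂
    have hP : YDegLE 1 (P k) := yDegLE_of_funcEq hF hI le_rfl hk₂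
    rw [Acoef, if_pos ⟨by omega, by omega⟩, Nat.add_sub_cancel_left,
      aCoef_eq_zero hP (show 1 < j - 1 by omega), aCoef_eq_zero hP (show 1 < j by omega)]
    ring
  exact ⟨hvanish 1 le_rfl one_le_two, hvanish 2 one_le_two le_rfl⟩

theorem stmt14 (ρ : ℝ) (hρ : ρ ∈ Set.Ioo (0 : ℝ) 1) (P : ℕ → Bzy)
    (hF : FuncEq ρ P) (hI : IndepY P) (hB : Boundary ρ P) :
    ∀ j : ℕ, 3 ≤ j → Acoef ρ P j (j + 1) = 0 ∧ Acoef ρ P j (j + 2) = 0 :=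
  stmt14_general ρ P hF hI
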